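/- arXiv:1504.02075 — 4 statements merged into one kernel-verified Lean document; each statement's English description precedes it below -/
import Mathlib

section
/- For coprime positive integers m and n, the rational Catalan number (1/(m+n)) * binomial(m+n, m) is an integer, and equals (m+n-1)!/(m! * n!). -/
open Nat

/-- Number of north steps among the first `i` steps of the path `P`
(`true` = north step `N`, `false` = east step `E`). -/
def nSteps (P : List Bool) (i : ℕ) : ℕ := (P.take i).count true

/-- Number of east steps among the first `i` steps. -/
def eSteps (P : List Bool) (i : ℕ) : ℕ := (P.take i).count false

/-- Rank `m*b - n*a` of the `i`-th lattice point `(a,b)` of the path. -/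
def rank (m n : ℕ) (P : List Bool) (i : ℕ) : ℤ :=
  (m : ℤ) * nSteps P i - (n : ℤ) * eSteps P i

/-- A lattice path from `(0,0)` to `(m,n)`: `m+n` unit steps, `n` of them north. -/
def IsPath (m n : ℕ) (P : List Bool) : Prop :=
  P.length = m + n ∧ P.count true = n

/-- An `(m,n)`-Dyck path: a path staying weakly above the diagonal,
equivalently with all ranks nonnegative. -/
def IsDyck (m n : ℕ) (P : List Bool) : Prop :=
  IsPath m n P ∧ ∀ i ≤ m + n, 0 ≤ rank m n P i

/-- The set of ranks of the first `m+n` lattice points of the path. -/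
def rankSet (m n : ℕ) (P : List Bool) : Finset ℤ :=
  (Finset.range (m + n)).image (rank m n P)

/-- Ranks of south ends (starting points of north steps). -/
def southRanks (m n : ℕ) (P : List Bool) : Finset ℤ :=
  ((Finset.range (m + n)).filter (fun i => P.getD i false = true)).image (rank m n P)

/-- Ranks of west ends (starting points of east steps). -/
def westRanks (m n : ℕ) (P : List Bool) : Finset ℤ :=
  ((Finset.range (m + n)).filter (fun i => P.getD i true = false)).image (rank m n P)

/-- Transpose of a path: reverse the word and exchange `N` and `E`. -/
def transpose (P : List Bool) : List Bool := (P.map (fun b => !b)).reverse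

/-- `D'` is the rank complement of `D`: its rank set is `M - r(D)`
where `M` is the maximum rank of `D`. -/
def IsRankComplement (m n : ℕ) (D D' : List Bool) : Prop :=
  ∃ M : ℤ, IsGreatest (↑(rankSet m n D) : Set ℤ) M ∧
    rankSet m n D' = (rankSet m n D).image (fun r => M - r)

/-- A partition, encoded as a weakly decreasing list of positive integers. -/
def IsPartition (L : List ℕ) : Prop :=
  L.Pairwise (· ≥ ·) ∧ ∀ x ∈ L, 0 < x

/-- Hook length of the cell in (0-based) row `i`, column `j`. -/
def hook (L : List ℕ) (i j : ℕ) : ℕ :=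
  L.getD i 0 - j + (L.drop (i + 1)).countP (fun x => decide (j < x))

/-- `L` is an `n`-core: no hook length is divisible by `n`. -/
def IsCore (n : ℕ) (L : List ℕ) : Prop :=
  ∀ i < L.length, ∀ j < L.getD i 0, ¬ (n ∣ hook L i j)

/-- The set of first-column hook lengths of `L`. -/
def firstColHooks (L : List ℕ) : Finset ℕ :=
  (Finset.range L.length).image (fun i => hook L i 0)

/-- Conjugate (transpose) partition. -/
def conjugate (L : List ℕ) : List ℕ :=
  (List.range (L.getD 0 0)).map (fun j => L.countP (fun x => decide (j < x)))

/-- `H` is `n`-flush: no element is a multiple of `n`, and it is closed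
under subtracting `n` while staying positive. -/
def IsFlush (n : ℕ) (H : Finset ℕ) : Prop :=
  (∀ h ∈ H, ¬ (n ∣ h)) ∧ ∀ h ∈ H, n < h → h - n ∈ H

/-- `s_i^n(H)`: the maximum of `((n+H) ∪ {i}) ∩ (i + nℤ)`. -/
def sFun (n : ℕ) (H : Finset ℕ) (i : ℕ) : ℕ :=
  (insert i ((H.filter (fun h => h % n = i % n)).image (fun h => h + n))).max'
    (Finset.insert_nonempty _ _)

/-- `S^n(H) = {s_0, ..., s_{n-1}}`. -/
def sSet (n : ℕ) (H : Finset ℕ) : Finset ℕ := (Finset.range n).image (sFun n H)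

/-- The lattice point `(a,b)` lies strictly to the right of the path `D`
inside the `m × n` rectangle: every lattice point of `D` at height `b`
has `x`-coordinate less than `a`. -/
def StrictlyRightOf (m n : ℕ) (D : List Bool) (a b : ℕ) : Prop :=
  a ≤ m ∧ b ≤ n ∧ ∀ i ≤ m + n, (D.take i).count true = b → (D.take i).count false < a

/-- The positive ranks of lattice points lying strictly to the right of `D`. -/
def andersonSet (m n : ℕ) (D : List Bool) : Set ℕ :=
  {h | 0 < h ∧ ∃ a b : ℕ, StrictlyRightOf m n D a b ∧ (h : ℤ) = (m : ℤ) * b - (n : ℤ) * a}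

/-- The `x`-coordinate of the vertical step of `D` at height `y`
(the number of east steps taken at heights `≤ y`). -/
def southX (D : List Bool) (y : ℕ) : ℕ :=
  (List.range D.length).countP
    (fun i => decide (D.getD i true = false ∧ (D.take i).count true ≤ y))

/-- The partition formed by the cells above the path `D`
inside a rectangle of height `n`. -/
def pathPartition (n : ℕ) (D : List Bool) : List ℕ :=
  (((List.range n).reverse).map (fun y => southX D y)).filter (fun x => decide (0 < x))

/-- Arm of the cell `(i,j)` of `L`. -/
def armL (L : List ℕ) (i j : ℕ) : ℕ := L.getD i 0 - (j + 1)

/-- Leg of the cell `(i,j)` of `L`. -/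
def legL (L : List ℕ) (i j : ℕ) : ℕ := (L.drop (i + 1)).countP (fun x => decide (j < x))

/-- The dinv statistic of an `(m,n)`-Dyck path: the number of cells `c` of the
partition above the path with `arm(c)/(leg(c)+1) ≤ m/n < (arm(c)+1)/leg(c)`. -/
def dinv (m n : ℕ) (D : List Bool) : ℕ :=
  ((Finset.range (pathPartition n D).length ×ˢ Finset.range m).filter
    (fun p => p.2 < (pathPartition n D).getD p.1 0 ∧
      armL (pathPartition n D) p.1 p.2 * n ≤ m * (legL (pathPartition n D) p.1 p.2 + 1) ∧
      m * legL (pathPartition n D) p.1 p.2 < n * (armL (pathPartition n D) p.1 p.2 + 1))).card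

/-- `codinv(D) = #{(r_s, r_w) : r_s ∈ S(D), r_w ∈ W(D), r_s < r_w}`. -/
def codinv (m n : ℕ) (D : List Bool) : ℕ :=
  ((southRanks m n D ×ˢ westRanks m n D).filter (fun p => p.1 < p.2)).card

/-- The skew length of an `(m,n)`-core: the number of cells lying both in an
`n`-row (a row `i` with `h_i + n ∈ S^n(H_λ)`) and in the `m`-boundary
(hook length `< m`). -/
def skewLength (m n : ℕ) (L : List ℕ) : ℕ :=
  ((Finset.range L.length ×ˢ Finset.range (L.headD 0)).filter
    (fun p => p.2 < L.getD p.1 0 ∧ hook L p.1 p.2 < m ∧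
      hook L p.1 0 + n ∈ sSet n (firstColHooks L))).card

-- `m * C(m+n, m) = (m+n) * C(m+n-1, m-1)`
theorem Nat.add_dvd_mul_choose (m n : ℕ) : m + n ∣ m * (m + n).choose m := by
  rcases m with _ | k
  · simp
  · have h := Nat.add_one_mul_choose_eq (k + n) k
    rw [show k + n + 1 = k + 1 + n by omega] at h
    exact ⟨_, by rw [mul_comm, ← h]⟩

theorem Nat.Coprime.add_dvd_choose {m n : ℕ} (h : m.Coprime n) : m + n ∣ (m + n).choose m :=
  (Nat.coprime_self_add_left.mpr h.symm).dvd_of_dvd_mul_left (Nat.add_dvd_mul_choose m n)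

theorem Nat.choose_div_add_eq {m n : ℕ} (h : 0 < m + n) :
    (m + n).choose m / (m + n) = (m + n - 1)! / (m ! * n !) := by
  rw [Nat.choose_eq_factorial_div_factorial (Nat.le_add_right m n), Nat.add_sub_cancel_left,
    Nat.div_div_eq_div_mul, ← Nat.mul_factorial_pred h.ne', mul_comm, Nat.mul_div_mul_right _ _ h]

theorem rational_catalan_integer_general (m n : ℕ)
    (hco : Nat.Coprime m n) :
    (m + n) ∣ (m + n).choose m ∧
      (m + n).choose m / (m + n) = (m + n - 1)! / (m ! * n !) :=
  ⟨hco.add_dvd_choose, Nat.choose_div_add_eq <| Nat.pos_of_ne_zero fun h => by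
    simp [Nat.add_eq_zero_iff.mp h] at hco⟩

/-- For coprime positive integers `m` and `n`, `m+n` divides
`binomial(m+n, m)`, and the rational Catalan number
`binomial(m+n,m)/(m+n)` equals `(m+n-1)!/(m! * n!)`. -/
theorem rational_catalan_integer (m n : ℕ) (hm : 0 < m) (hn : 0 < n)
    (hco : Nat.Coprime m n) :
    (m + n) ∣ (m + n).choose m ∧
      (m + n).choose m / (m + n) = (m + n - 1)! / (m ! * n !) :=
  rational_catalan_integer_general m n hco
end

section
/- Let m, n be coprime positive integers and let D be an (m,n)-Dyck path with rank set R and maximum rank M = max R. Then the set M - R = {M - r : r ∈ R} is the rank set of an (m,n)-Dyck path (the rank complement of D). -/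
open Nat

/-!
Cut `D` at a point `k` of maximal rank `M` and reverse both pieces. Because the ranks of a closed
path vanish at both ends, the `i`-th rank of the new path is `M - r_{σ i}`, where
`σ = pieceReflect (m + n) k` reverses `[0, k]` and `[k, m + n)` separately. As `σ` is an involution
of `[0, m + n)`, the new rank set is `M - R`, and the new ranks are nonnegative since `M` bounds `R`.
-/

def weight (m n : ℕ) (l : List Bool) : ℤ := m * l.count true - n * l.count false

section Rank

variable (m n : ℕ)

lemma rank_eq_weight (P : List Bool) (i : ℕ) : rank m n P i = weight m n (P.take i) := rfl

lemma weight_append (l₁ l₂ : List Bool) :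
    weight m n (l₁ ++ l₂) = weight m n l₁ + weight m n l₂ := by
  simp only [weight, List.count_append]
  push_cast
  ring

lemma weight_reverse (l : List Bool) : weight m n l.reverse = weight m n l := by
  simp only [weight, List.count_reverse]

lemma weight_eq_zero_of_isPath {P : List Bool} (hP : IsPath m n P) : weight m n P = 0 := by
  obtain ⟨hlen, hN⟩ := hP
  have hE : P.count false = m := by
    have := List.count_true_add_count_false P
    omega
  rw [weight, hN, hE]
  ring

lemma rank_zero (P : List Bool) : rank m n P 0 = 0 := by
  simp [rank, nSteps, eSteps]

lemma rank_of_length_le {P : List Bool} {i : ℕ} (h : P.length ≤ i) :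
    rank m n P i = weight m n P := by
  rw [rank_eq_weight, List.take_of_length_le h]

lemma rank_append (l₁ l₂ : List Bool) (i : ℕ) :
    rank m n (l₁ ++ l₂) i = rank m n l₁ i + rank m n l₂ (i - l₁.length) := by
  simp only [rank_eq_weight, List.take_append, weight_append]

lemma rank_reverse (l : List Bool) (i : ℕ) :
    rank m n l.reverse i = weight m n l - rank m n l (l.length - i) := by
  have h := weight_append m n (l.take (l.length - i)) (l.drop (l.length - i))
  rw [List.take_append_drop] at h
  rw [rank_eq_weight, List.take_reverse, weight_reverse, rank_eq_weight]
  linarith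

lemma rank_take (P : List Bool) (k i : ℕ) : rank m n (P.take k) i = rank m n P (min i k) := by
  simp only [rank_eq_weight, List.take_take]

lemma rank_drop (P : List Bool) (k i : ℕ) :
    rank m n (P.drop k) i = rank m n P (k + i) - rank m n P k := by
  simp only [rank_eq_weight, List.take_add, weight_append]
  ring

end Rank

def rankComplement (D : List Bool) (k : ℕ) : List Bool := (D.take k).reverse ++ (D.drop k).reverse

lemma rankComplement_perm (D : List Bool) (k : ℕ) : (rankComplement D k).Perm D := by
  simpa [rankComplement] using (List.reverse_perm (D.take k)).append (List.reverse_perm (D.drop k))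

lemma IsPath.rankComplement {m n : ℕ} {D : List Bool} (hD : IsPath m n D) (k : ℕ) :
    IsPath m n (rankComplement D k) :=
  ⟨(rankComplement_perm D k).length_eq.trans hD.1,
    ((rankComplement_perm D k).count_eq true).trans hD.2⟩

def pieceReflect (L k i : ℕ) : ℕ := if i ≤ k then k - i else L + k - i

section PieceReflect

variable {L k : ℕ}

lemma pieceReflect_lt (hk : k < L) {i : ℕ} (hi : i ≤ L) : pieceReflect L k i < L := by
  unfold pieceReflect
  split_ifs <;> omega

lemma pieceReflect_pieceReflect (hk : k < L) {i : ℕ} (hi : i < L) :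
    pieceReflect L k (pieceReflect L k i) = i := by
  unfold pieceReflect
  split_ifs <;> omega

lemma image_pieceReflect_range (hk : k < L) :
    (Finset.range L).image (pieceReflect L k) = Finset.range L := by
  ext i
  simp only [Finset.mem_image, Finset.mem_range]
  constructor
  · rintro ⟨j, hj, rfl⟩
    exact pieceReflect_lt hk hj.le
  · intro hi
    exact ⟨_, pieceReflect_lt hk hi.le, pieceReflect_pieceReflect hk hi⟩

end PieceReflect

lemma rank_rankComplement (m n : ℕ) {D : List Bool} {k i : ℕ} (hk : k ≤ D.length)
    (hD : weight m n D = 0) (hi : i ≤ D.length) :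
    rank m n (rankComplement D k) i = rank m n D k - rank m n D (pieceReflect D.length k i) := by
  have hlen : (D.take k).reverse.length = k := by simp [hk]
  have hdrop : weight m n (D.drop k) = - rank m n D k := by
    have h := weight_append m n (D.take k) (D.drop k)
    rw [List.take_append_drop, hD] at h
    rw [rank_eq_weight]
    linarith
  rw [rankComplement, rank_append, hlen, rank_reverse, rank_reverse, rank_take, rank_drop, hdrop,
    List.length_take, List.length_drop, min_eq_left hk, ← rank_eq_weight, pieceReflect]
  split_ifs with h
  · rw [min_eq_left (Nat.sub_le k i), show k + (D.length - k - (i - k)) = D.length by omega,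
      rank_of_length_le m n le_rfl, hD]
    ring
  · rw [show k - i = 0 by omega, Nat.zero_min, rank_zero,
      show k + (D.length - k - (i - k)) = D.length + k - i by omega]
    ring

theorem rank_complement_exists_general (m n : ℕ)
    (D : List Bool) (hD : IsDyck m n D) (M : ℤ)
    (hM : IsGreatest (↑(rankSet m n D) : Set ℤ) M) :
    ∃ D', IsDyck m n D' ∧
      rankSet m n D' = (rankSet m n D).image (fun r => M - r) := by
  obtain ⟨hpath, -⟩ := hD
  obtain ⟨k, hk, hkM⟩ := Finset.mem_image.mp hM.1
  rw [Finset.mem_range] at hk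
  have hL : D.length = m + n := hpath.1
  have hrank : ∀ i ≤ m + n,
      rank m n (rankComplement D k) i = M - rank m n D (pieceReflect (m + n) k i) := by
    intro i hi
    rw [← hL, ← hkM]
    exact rank_rankComplement m n (by omega) (weight_eq_zero_of_isPath m n hpath) (by omega)
  refine ⟨rankComplement D k, ⟨hpath.rankComplement k, fun i hi => ?_⟩, ?_⟩
  · rw [hrank i hi, sub_nonneg]
    exact hM.2 (Finset.mem_image_of_mem _ (Finset.mem_range.mpr (pieceReflect_lt hk hi)))
  · rw [rankSet, rankSet, Finset.image_congr (fun i hi => hrank i (Finset.mem_range.mp hi).le)]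
    conv_rhs => rw [← image_pieceReflect_range hk, Finset.image_image, Finset.image_image]
    rfl

/-- For an `(m,n)`-Dyck path `D` (with `m, n` coprime) with rank set
`R` and maximum rank `M`, the set `M - R` is the rank set of an `(m,n)`-Dyck path. -/
theorem rank_complement_exists (m n : ℕ) (hm : 0 < m) (hn : 0 < n)
    (hco : Nat.Coprime m n) (D : List Bool) (hD : IsDyck m n D) (M : ℤ)
    (hM : IsGreatest (↑(rankSet m n D) : Set ℤ) M) :
    ∃ D', IsDyck m n D' ∧
      rankSet m n D' = (rankSet m n D).image (fun r => M - r) :=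
  rank_complement_exists_general m n D hD M hM
end

section
/- A partition λ is an n-core (no hook length divisible by n) if and only if its set of first-column hook lengths H is n-flush, i.e., no element of H is divisible by n, and for every h ∈ H with h > n, also h - n ∈ H. -/
open Nat

/-! For a row `i` of `λ` with first-column hook `h_i`, the numbers `t < h_i` split into the
first-column hooks `h_k` of the rows `k > i` and the differences `h_i - hook(i,j)`. These
differences are the values `gap j = j + a - λ'_j` (with `a` the number of rows and `λ'` the
conjugate), which never lie in `H_λ`. So the hooks of row `i` are exactly the numbers `h_i - t`
with `t < h_i`, `t ∉ H_λ`. Hence a hook equal to `n` exists iff some `h ∈ H_λ` has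
`h - n ∉ H_λ`; and a hook `q n` in row `i` gives `h_i - q n ∉ H_λ`, which a flush `H_λ`
forbids. -/

open Finset

namespace List

theorem lt_getD_iff_lt_countP {L : List ℕ} (hL : L.Pairwise (· ≥ ·)) (j k : ℕ) :
    j < L.getD k 0 ↔ k < L.countP (j < ·) := by
  induction L generalizing k with
  | nil => simp
  | cons x t ih =>
    obtain ⟨hxt, ht⟩ := pairwise_cons.1 hL
    by_cases hjx : j < x
    · cases k with
      | zero => simp [hjx]
      | succ k => simpa [countP_cons, hjx] using ih ht k
    · have hzero : t.countP (j < ·) = 0 :=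
        countP_eq_zero.2 fun y hy => by simpa using (hxt y hy).trans (not_lt.1 hjx)
      cases k with
      | zero => simp [hjx, hzero]
      | succ k => simpa [countP_cons, hjx, hzero] using ih ht k

theorem countP_drop_of_pairwise {L : List ℕ} (hL : L.Pairwise (· ≥ ·)) (j m : ℕ) :
    (L.drop m).countP (j < ·) = L.countP (j < ·) - m := by
  induction L generalizing m with
  | nil => simp
  | cons x t ih =>
    obtain ⟨hxt, ht⟩ := pairwise_cons.1 hL
    cases m with
    | zero => simp
    | succ m =>
      rw [drop_succ_cons, ih ht, countP_cons]
      by_cases hjx : j < x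
      · simp [hjx]
      · have hzero : t.countP (j < ·) = 0 :=
          countP_eq_zero.2 fun y hy => by simpa using (hxt y hy).trans (not_lt.1 hjx)
        simp [hjx, hzero]

theorem antitone_getD_of_pairwise {L : List ℕ} (hL : L.Pairwise (· ≥ ·)) :
    Antitone (L.getD · 0) := fun k l hkl => by
  by_contra! hlt
  have hl := (lt_getD_iff_lt_countP hL _ l).1 hlt
  exact lt_irrefl _ ((lt_getD_iff_lt_countP hL _ k).2 (hkl.trans_lt hl))

end List

theorem mem_firstColHooks {L : List ℕ} {x : ℕ} :
    x ∈ firstColHooks L ↔ ∃ i < L.length, hook L i 0 = x := by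
  simp [firstColHooks]

theorem hook_pos {L : List ℕ} {i j : ℕ} (hj : j < L.getD i 0) : 0 < hook L i j := by
  unfold hook
  omega

def gap (L : List ℕ) (j : ℕ) : ℕ := j + L.length - L.countP (j < ·)

theorem gap_strictMono (L : List ℕ) : StrictMono (gap L) :=
  strictMono_nat_of_lt_succ fun j => by
    have hle : L.countP (j + 1 < ·) ≤ L.countP (j < ·) :=
      List.countP_mono_left fun x _ hx => by simp at hx ⊢; omega
    have hlen : L.countP (j < ·) ≤ L.length := List.countP_le_length
    unfold gap
    omega

namespace IsPartition

variable {L : List ℕ} (hL : IsPartition L)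
include hL

theorem getD_pos {i : ℕ} (hi : i < L.length) : 0 < L.getD i 0 :=
  hL.2 _ (by rw [List.getD_eq_getElem (hn := hi)]; exact List.getElem_mem hi)

theorem hook_add {i j : ℕ} (hj : j < L.getD i 0) :
    hook L i j + (i + 1) + j = L.getD i 0 + L.countP (j < ·) := by
  have hi := (List.lt_getD_iff_lt_countP hL.1 j i).1 hj
  unfold hook
  rw [List.countP_drop_of_pairwise hL.1]
  omega

theorem hook_zero_add {i : ℕ} (hi : i < L.length) :
    hook L i 0 + (i + 1) = L.getD i 0 + L.length := by
  have hall : L.countP (0 < ·) = L.length :=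
    List.countP_eq_length.2 fun x hx => by simpa using hL.2 x hx
  simpa [hall] using hL.hook_add (hL.getD_pos hi)

theorem hook_add_gap {i j : ℕ} (hj : j < L.getD i 0) :
    hook L i j + gap L j = hook L i 0 := by
  have hlen : L.countP (j < ·) ≤ L.length := List.countP_le_length
  have hi := ((List.lt_getD_iff_lt_countP hL.1 j i).1 hj).trans_le hlen
  have h₁ := hL.hook_add hj
  have h₀ := hL.hook_zero_add hi
  unfold gap
  omega

theorem gap_not_mem_firstColHooks (j : ℕ) : gap L j ∉ firstColHooks L := by
  intro hmem
  obtain ⟨k, hk, hgap⟩ := mem_firstColHooks.1 hmem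
  have hkey := List.lt_getD_iff_lt_countP hL.1 j k
  have hlen : L.countP (j < ·) ≤ L.length := List.countP_le_length
  have h₀ := hL.hook_zero_add hk
  unfold gap at hgap
  by_cases hjk : j < L.getD k 0
  · have := hkey.1 hjk
    omega
  · have := mt hkey.2 hjk
    omega

theorem strictAntiOn_hook_zero : StrictAntiOn (hook L · 0) (Set.Iio L.length) :=
  fun k hk l hl hkl => by
    have hanti := List.antitone_getD_of_pairwise hL.1 hkl.le
    have h₀ := hL.hook_zero_add hk
    have h₀' := hL.hook_zero_add hl
    simp only at hanti ⊢
    omega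

/-- Counting argument: both pieces lie below `h_i`, are disjoint, and have
`λ_i + (a - 1 - i) = h_i` elements in total. -/
theorem range_hook_zero_subset {i : ℕ} (hi : i < L.length) :
    range (hook L i 0) ⊆
      (range (L.getD i 0)).image (gap L) ∪ (Ioo i L.length).image (hook L · 0) := by
  set S₁ := (range (L.getD i 0)).image (gap L)
  set S₂ := (Ioo i L.length).image (hook L · 0)
  have hsub : S₁ ∪ S₂ ⊆ range (hook L i 0) := by
    refine union_subset (image_subset_iff.2 fun j hj => ?_) (image_subset_iff.2 fun k hk => ?_)
    · have hj' : j < L.getD i 0 := mem_range.1 hj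
      have := hL.hook_add_gap hj'
      have := hook_pos hj'
      exact mem_range.2 (by omega)
    · obtain ⟨hik, hk⟩ := mem_Ioo.1 hk
      exact mem_range.2 (hL.strictAntiOn_hook_zero (hik.trans hk) hk hik)
  have hdisj : Disjoint S₁ S₂ := by
    refine disjoint_left.2 fun t ht ht' => ?_
    obtain ⟨j, -, rfl⟩ := mem_image.1 ht
    obtain ⟨k, hk, hgap⟩ := mem_image.1 ht'
    exact hL.gap_not_mem_firstColHooks j (mem_firstColHooks.2 ⟨k, (mem_Ioo.1 hk).2, hgap⟩)
  have hinj : Set.InjOn (hook L · 0) (Ioo i L.length) :=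
    hL.strictAntiOn_hook_zero.injOn.mono fun k hk => (mem_Ioo.1 hk).2
  have hcard : #(S₁ ∪ S₂) = hook L i 0 := by
    rw [card_union_of_disjoint hdisj, card_image_of_injective _ (gap_strictMono L).injective,
      Finset.card_image_of_injOn hinj, card_range, Nat.card_Ioo]
    have := hL.hook_zero_add hi
    omega
  exact (eq_of_subset_of_card_le hsub (by rw [hcard, card_range])).ge

theorem exists_gap_eq {i t : ℕ} (hi : i < L.length) (ht : t < hook L i 0)
    (htH : t ∉ firstColHooks L) : ∃ j < L.getD i 0, gap L j = t := by
  rcases mem_union.1 (hL.range_hook_zero_subset hi (mem_range.2 ht)) with h | h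
  · simpa using h
  · obtain ⟨k, hk, rfl⟩ := mem_image.1 h
    exact absurd (mem_firstColHooks.2 ⟨k, (mem_Ioo.1 hk).2, rfl⟩) htH

end IsPartition

theorem IsFlush.mem_of_dvd_sub {n : ℕ} {H : Finset ℕ} (hF : IsFlush n H) {h t : ℕ}
    (hh : h ∈ H) (hth : t ≤ h) (hdvd : n ∣ h - t) : t ∈ H := by
  obtain ⟨q, hq⟩ := hdvd
  induction q generalizing h with
  | zero => rwa [show t = h by simp only [mul_zero] at hq; omega]
  | succ q ih =>
    rw [mul_add_one] at hq
    have hnh : n < h := by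
      rcases (show n ≤ h by omega).lt_or_eq with hlt | rfl
      · exact hlt
      · exact absurd (dvd_refl n) (hF.1 n hh)
    exact ih (hF.2 h hh hnh) (by omega) (by omega)

theorem core_iff_flush_general (n : ℕ) (L : List ℕ) (hL : IsPartition L) :
    IsCore n L ↔ IsFlush n (firstColHooks L) := by
  constructor
  · intro hcore
    refine ⟨fun h hh => ?_, fun h hh hnh => ?_⟩
    · obtain ⟨i, hi, rfl⟩ := mem_firstColHooks.1 hh
      exact hcore i hi 0 (hL.getD_pos hi)
    · obtain ⟨i, hi, rfl⟩ := mem_firstColHooks.1 hh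
      by_contra hsub
      obtain rfl | hn := n.eq_zero_or_pos
      · exact hsub (by simpa using hh)
      obtain ⟨j, hj, hgap⟩ := hL.exists_gap_eq hi (by omega) hsub
      have hsum := hL.hook_add_gap hj
      exact hcore i hi j hj ⟨1, by omega⟩
  · intro hF i hi j hj hdvd
    have hsum := hL.hook_add_gap hj
    refine hL.gap_not_mem_firstColHooks j
      (hF.mem_of_dvd_sub (mem_firstColHooks.2 ⟨i, hi, rfl⟩) (by omega) ?_)
    rwa [← hsum, Nat.add_sub_cancel]

/-- A partition is an `n`-core iff its set of first-column hook
lengths is `n`-flush. -/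
theorem core_iff_flush (n : ℕ) (hn : 0 < n) (L : List ℕ) (hL : IsPartition L) :
    IsCore n L ↔ IsFlush n (firstColHooks L) :=
  core_iff_flush_general n L hL
end

section
/- Let n ≥ 1 and let λ be a partition whose first-column hook-length set H_λ is n-flush, with largest element h_1. Then the first-column hook-length set of the conjugate λ^T is also n-flush, and S^n(H_{λ^T}) = h_1 + n - S^n(H_λ) as sets, where S^n(H) = {s_0,...,s_{n-1}} with s_i the maximum of ((n+H) ∪ {i}) ∩ (i + nℤ). -/
open Nat

/-! The first-column hook lengths of `λ` and `λᵀ` are complementary: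
`H_{λᵀ} = h₁ - ([0, h₁] \ H_λ)`. Indeed `h₁ = λ₁ + ℓ(λ) - 1`, the two sets have `ℓ(λ)` and `λ₁`
elements, and no `h ∈ H_λ` and `h' ∈ H_{λᵀ}` sum to `h₁`, because `j < λ_i ↔ i < λᵀ_j`.

A flush set meets every residue class mod `n` in an initial segment of that class, so `S^n(H)`
consists of the `t ∉ H` with `t < n` or `t - n ∈ H`. The reflection `t ↦ h₁ + n - t` visibly
exchanges this description for `H` with the one for `h₁ - ([0, h₁] \ H)`. -/

section Flush

variable {n : ℕ} {H : Finset ℕ}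

theorem IsFlush.mem_of_add_mul_mem (hH : IsFlush n H) {x : ℕ} :
    ∀ {k : ℕ}, x + n * k ∈ H → x ∈ H
  | 0, h => by simpa using h
  | k + 1, h => by
    have hpos : 0 < x + n * k := by
      by_contra h0
      have hn : x + n * (k + 1) = n := by rw [Nat.mul_succ]; omega
      exact hH.1 _ h (by rw [hn])
    have hsub := hH.2 _ h (by rw [Nat.mul_succ]; omega)
    exact hH.mem_of_add_mul_mem (by rwa [Nat.mul_succ, ← add_assoc, Nat.add_sub_cancel] at hsub)

theorem IsFlush.add_le_of_modEq (hH : IsFlush n H) {h t : ℕ} (hh : h ∈ H) (ht : t ∉ H)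
    (hmod : h ≡ t [MOD n]) : h + n ≤ t := by
  rcases le_or_gt t h with hth | hht
  · obtain ⟨k, hk⟩ := (Nat.modEq_iff_dvd' hth).mp hmod.symm
    exact absurd (hH.mem_of_add_mul_mem (by rwa [← hk, Nat.add_sub_cancel' hth])) ht
  · obtain ⟨k, hk⟩ := (Nat.modEq_iff_dvd' hht.le).mp hmod
    have hk0 : k ≠ 0 := by rintro rfl; omega
    have : n ≤ n * k := Nat.le_mul_of_pos_right n (Nat.pos_of_ne_zero hk0)
    omega

theorem self_le_sFun (n : ℕ) (H : Finset ℕ) (i : ℕ) : i ≤ sFun n H i :=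
  Finset.le_max' _ _ (Finset.mem_insert_self _ _)

theorem add_le_sFun {h i : ℕ} (hh : h ∈ H) (hmod : h ≡ i [MOD n]) : h + n ≤ sFun n H i :=
  Finset.le_max' _ _ <| Finset.mem_insert_of_mem <|
    Finset.mem_image_of_mem (· + n) (Finset.mem_filter.mpr ⟨hh, hmod⟩)

theorem sFun_le {i t : ℕ} (hi : i ≤ t) (hH : ∀ h ∈ H, h ≡ i [MOD n] → h + n ≤ t) :
    sFun n H i ≤ t := by
  refine Finset.max'_le _ _ _ fun y hy => ?_
  simp only [Finset.mem_insert, Finset.mem_image, Finset.mem_filter] at hy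
  obtain rfl | ⟨h, ⟨hh, hmod⟩, rfl⟩ := hy
  exacts [hi, hH h hh hmod]

theorem sFun_eq_self_or (n : ℕ) (H : Finset ℕ) (i : ℕ) :
    sFun n H i = i ∨ ∃ h ∈ H, h ≡ i [MOD n] ∧ sFun n H i = h + n := by
  have hmem := Finset.max'_mem (insert i ((H.filter (fun h => h % n = i % n)).image (· + n)))
    (Finset.insert_nonempty _ _)
  simp only [Finset.mem_insert, Finset.mem_image, Finset.mem_filter] at hmem
  obtain hi | ⟨h, ⟨hh, hmod⟩, hs⟩ := hmem
  exacts [Or.inl hi, Or.inr ⟨h, hh, hmod, hs.symm⟩]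

theorem sFun_modEq (n : ℕ) (H : Finset ℕ) (i : ℕ) : sFun n H i ≡ i [MOD n] := by
  obtain hs | ⟨h, -, hmod, hs⟩ := sFun_eq_self_or n H i
  · rw [hs]
  · rw [hs]
    exact (Nat.add_modEq_right).trans hmod

theorem sFun_notMem (hn : 0 < n) (H : Finset ℕ) (i : ℕ) : sFun n H i ∉ H := fun hs =>
  absurd (add_le_sFun hs (sFun_modEq n H i)) (by omega)

theorem IsFlush.mem_sSet_iff (hn : 0 < n) (hH : IsFlush n H) {t : ℕ} :
    t ∈ sSet n H ↔ t ∉ H ∧ (n ≤ t → t - n ∈ H) := by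
  simp only [sSet, Finset.mem_image, Finset.mem_range]
  constructor
  · rintro ⟨i, hi, rfl⟩
    refine ⟨sFun_notMem hn H i, fun hni => ?_⟩
    obtain hs | ⟨h, hh, -, hs⟩ := sFun_eq_self_or n H i
    · omega
    · rwa [hs, Nat.add_sub_cancel]
  · rintro ⟨ht, hsub⟩
    refine ⟨t % n, Nat.mod_lt t hn, le_antisymm ?_ ?_⟩
    · exact sFun_le (Nat.mod_le t n) fun h hh hmod =>
        hH.add_le_of_modEq hh ht (hmod.trans (Nat.mod_modEq t n))
    · by_cases hnt : n ≤ t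
      · have hmod : t - n ≡ t % n [MOD n] := by
          calc t - n ≡ t - n + n [MOD n] := Nat.add_modEq_right.symm
            _ = t := Nat.sub_add_cancel hnt
            _ ≡ t % n [MOD n] := (Nat.mod_modEq t n).symm
        simpa [Nat.sub_add_cancel hnt] using add_le_sFun (hsub hnt) hmod
      · simpa [Nat.mod_eq_of_lt (not_le.mp hnt)] using self_le_sFun n H (t % n)

def reflectCompl (N : ℕ) (H : Finset ℕ) : Finset ℕ :=
  (Finset.range (N + 1) \ H).image (N - ·)

theorem mem_reflectCompl {N y : ℕ} : y ∈ reflectCompl N H ↔ y ≤ N ∧ N - y ∉ H := by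
  simp only [reflectCompl, Finset.mem_image, Finset.mem_sdiff, Finset.mem_range]
  constructor
  · rintro ⟨x, ⟨hx, hxH⟩, rfl⟩
    exact ⟨Nat.sub_le N x, by rwa [Nat.sub_sub_self (by omega)]⟩
  · rintro ⟨hy, hyH⟩
    exact ⟨N - y, ⟨by omega, hyH⟩, Nat.sub_sub_self hy⟩

theorem card_reflectCompl_le {N : ℕ} (hH : ∀ h ∈ H, h ≤ N) :
    (reflectCompl N H).card ≤ N + 1 - H.card := by
  have hsub : H ⊆ Finset.range (N + 1) := fun h hh =>
    Finset.mem_range.mpr (Nat.lt_succ_of_le (hH h hh))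
  calc (reflectCompl N H).card ≤ (Finset.range (N + 1) \ H).card := Finset.card_image_le
    _ = N + 1 - H.card := by rw [Finset.card_sdiff_of_subset hsub, Finset.card_range]

theorem isFlush_reflectCompl (hH : IsFlush n H) {N : ℕ} (hN : N ∈ H) :
    IsFlush n (reflectCompl N H) := by
  refine ⟨fun y hy ⟨k, hk⟩ => ?_, fun y hy hny => ?_⟩
  · rw [mem_reflectCompl] at hy
    exact hy.2 (hH.mem_of_add_mul_mem (k := k) (by rwa [← hk, Nat.sub_add_cancel hy.1]))
  · rw [mem_reflectCompl] at hy ⊢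
    refine ⟨by omega, fun hmem => hy.2 (hH.mem_of_add_mul_mem (k := 1) ?_)⟩
    rwa [show N - y + n * 1 = N - (y - n) by omega]

theorem IsFlush.sSet_reflectCompl (hn : 0 < n) (hH : IsFlush n H) {N : ℕ}
    (hN : IsGreatest (↑H : Set ℕ) N) :
    sSet n (reflectCompl N H) = (sSet n H).image (N + n - ·) := by
  have hmax : ∀ h ∈ H, h ≤ N := fun h hh => hN.2 hh
  ext t
  rw [(isFlush_reflectCompl hH hN.1).mem_sSet_iff hn, Finset.mem_image]
  simp only [hH.mem_sSet_iff hn, mem_reflectCompl]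
  constructor
  · rintro ⟨ht, hsub⟩
    have htN : t ≤ N + n := by
      by_cases hnt : n ≤ t
      · have := (hsub hnt).1; omega
      · omega
    refine ⟨N + n - t, ⟨fun hmem => ?_, fun hns => ?_⟩, by omega⟩
    · by_cases hnt : n ≤ t
      · exact (hsub hnt).2 (by rwa [show N - (t - n) = N + n - t by omega])
      · exact absurd (hmax _ hmem) (by omega)
    · rw [show N + n - t - n = N - t by omega]
      by_contra hNt
      exact ht ⟨by omega, hNt⟩
  · rintro ⟨s, ⟨hs, hsub⟩, rfl⟩
    have hsN : s ≤ N + n := by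
      by_cases hns : n ≤ s
      · have := hmax _ (hsub hns); omega
      · omega
    refine ⟨fun ⟨hle, hnot⟩ => hnot ?_, fun hnt => ⟨by omega, ?_⟩⟩
    · rw [show N - (N + n - s) = s - n by omega]
      exact hsub (by omega)
    · rwa [show N - (N + n - s - n) = s by omega]

end Flush

section Partition

variable {L : List ℕ}

theorem getD_le_getD_of_le (hL : L.Pairwise (· ≥ ·)) {i j : ℕ} (hij : i ≤ j) :
    L.getD j 0 ≤ L.getD i 0 := by
  rcases lt_or_ge j L.length with hj | hj
  · rcases hij.eq_or_lt with rfl | hij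
    · exact le_rfl
    · rw [List.getD_eq_getElem _ _ hj, List.getD_eq_getElem _ _ (hij.trans hj)]
      exact List.pairwise_iff_getElem.mp hL i j (hij.trans hj) hj hij
  · rw [List.getD_eq_default _ _ hj]
    exact Nat.zero_le _

theorem lt_countP_iff (hL : L.Pairwise (· ≥ ·)) {i j : ℕ} :
    i < L.countP (fun x => decide (j < x)) ↔ j < L.getD i 0 := by
  rcases lt_or_ge i L.length with hi | hi
  · have hsplit : L = L.take i ++ L[i] :: L.drop (i + 1) := by
      rw [← List.drop_eq_getElem_cons hi, List.take_append_drop]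
    have hpw := hL
    rw [hsplit, List.pairwise_append, List.pairwise_cons] at hpw
    have hbefore : ∀ x ∈ L.take i, L[i] ≤ x := fun x hx => hpw.2.2 x hx _ List.mem_cons_self
    have hafter : ∀ x ∈ L.drop (i + 1), x ≤ L[i] := hpw.2.1.1
    have htake : (L.take i).length = i := List.length_take_of_le hi.le
    rw [List.getD_eq_getElem _ _ hi]
    conv_lhs => rw [hsplit, List.countP_append, List.countP_cons]
    by_cases hj : j < L[i]
    · have : (L.take i).countP (fun x => decide (j < x)) = i := by
        rw [List.countP_eq_length.mpr fun x hx => by simpa using hj.trans_le (hbefore x hx),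
          htake]
      simp [this, hj]
    · have hzero : (L.drop (i + 1)).countP (fun x => decide (j < x)) = 0 :=
        List.countP_eq_zero.mpr fun x hx => by simpa using (hafter x hx).trans (not_lt.mp hj)
      have := List.countP_le_length (p := fun x => decide (j < x)) (l := L.take i)
      simp only [hzero, hj, decide_false, Bool.false_eq_true, if_false, iff_false, not_lt]
      omega
  · rw [List.getD_eq_default _ _ hi]
    have := List.countP_le_length (p := fun x => decide (j < x)) (l := L)
    omega

theorem hook_zero (hL : ∀ x ∈ L, 0 < x) (i : ℕ) :
    hook L i 0 = L.getD i 0 + (L.length - 1 - i) := by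
  have hcount : (L.drop (i + 1)).countP (fun x => decide (0 < x)) = L.length - 1 - i := by
    rw [List.countP_eq_length.mpr fun x hx => by simpa using hL x (List.mem_of_mem_drop hx),
      List.length_drop]
    omega
  rw [hook, hcount, Nat.sub_zero]

theorem IsPartition.strictAntiOn_hook_zero_s11 (hL : IsPartition L) :
    StrictAntiOn (hook L · 0) (Set.Iio L.length) := fun i _ j hj hij => by
  have := getD_le_getD_of_le hL.1 hij.le
  simp only [Set.mem_Iio] at hj
  simp only [hook_zero hL.2]
  omega

theorem IsPartition.card_firstColHooks (hL : IsPartition L) :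
    (firstColHooks L).card = L.length := by
  rw [firstColHooks, Finset.card_image_of_injOn, Finset.card_range]
  simpa using hL.strictAntiOn_hook_zero_s11.injOn

theorem IsPartition.isGreatest_firstColHooks (hL : IsPartition L) (hne : L ≠ []) :
    IsGreatest (↑(firstColHooks L) : Set ℕ) (hook L 0 0) := by
  refine ⟨Finset.mem_image_of_mem _ (Finset.mem_range.mpr (List.length_pos_iff.mpr hne)), ?_⟩
  intro y hy
  obtain ⟨i, -, rfl⟩ := Finset.mem_image.mp hy
  have := getD_le_getD_of_le hL.1 (Nat.zero_le i)
  simp only [hook_zero hL.2]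
  omega

theorem length_conjugate (L : List ℕ) : (conjugate L).length = L.getD 0 0 := by
  simp [conjugate]

theorem getD_conjugate {j : ℕ} (hj : j < L.getD 0 0) :
    (conjugate L).getD j 0 = L.countP (fun x => decide (j < x)) := by
  rw [List.getD_eq_getElem _ _ (by rwa [length_conjugate])]
  simp [conjugate]

theorem isPartition_conjugate (hL : IsPartition L) : IsPartition (conjugate L) := by
  refine ⟨List.pairwise_map.mpr (List.pairwise_lt_range.imp fun hjk => ?_), ?_⟩
  · exact List.countP_mono_left fun x _ hx => by simp only [decide_eq_true_eq] at hx ⊢; omega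
  · simp only [conjugate, List.mem_map, List.mem_range]
    rintro _ ⟨j, hj, rfl⟩
    exact (lt_countP_iff hL.1).mpr hj

theorem IsPartition.firstColHooks_conjugate (hL : IsPartition L) (hne : L ≠ []) :
    firstColHooks (conjugate L) = reflectCompl (hook L 0 0) (firstColHooks L) := by
  have ha : 0 < L.length := List.length_pos_iff.mpr hne
  have hN : hook L 0 0 = L.getD 0 0 + (L.length - 1) := by simp [hook_zero hL.2]
  have hconj := isPartition_conjugate hL
  refine Finset.eq_of_subset_of_card_le (fun y hy => ?_) ?_
  · obtain ⟨j, hj, rfl⟩ := Finset.mem_image.mp hy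
    rw [Finset.mem_range, length_conjugate] at hj
    rw [mem_reflectCompl, hook_zero hconj.2, length_conjugate, getD_conjugate hj, hN]
    have hcount := List.countP_le_length (p := fun x => decide (j < x)) (l := L)
    refine ⟨by omega, fun hmem => ?_⟩
    obtain ⟨i, hi, hhook⟩ := Finset.mem_image.mp hmem
    rw [Finset.mem_range] at hi
    rw [hook_zero hL.2] at hhook
    have := lt_countP_iff hL.1 (i := i) (j := j)
    by_cases hji : j < L.getD i 0 <;> omega
  · calc (reflectCompl (hook L 0 0) (firstColHooks L)).card
        ≤ hook L 0 0 + 1 - (firstColHooks L).card :=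
          card_reflectCompl_le fun h hh => (hL.isGreatest_firstColHooks hne).2 hh
      _ = (firstColHooks (conjugate L)).card := by
          rw [hL.card_firstColHooks, hconj.card_firstColHooks, length_conjugate]
          omega

end Partition

/-- If the first-column hook-length set `H_λ` of a partition `λ`
is `n`-flush with largest element `h₁`, then the first-column hook-length set of
the conjugate `λᵀ` is `n`-flush and `S^n(H_{λᵀ}) = h₁ + n - S^n(H_λ)`. -/
theorem flush_conjugate (n : ℕ) (hn : 0 < n) (L : List ℕ) (hL : IsPartition L)
    (hne : L ≠ []) (hflush : IsFlush n (firstColHooks L)) (h1 : ℕ)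
    (hh1 : IsGreatest (↑(firstColHooks L) : Set ℕ) h1) :
    IsFlush n (firstColHooks (conjugate L)) ∧
      sSet n (firstColHooks (conjugate L)) =
        (sSet n (firstColHooks L)).image (fun s => h1 + n - s) := by
  obtain rfl : h1 = hook L 0 0 := hh1.unique (hL.isGreatest_firstColHooks hne)
  rw [hL.firstColHooks_conjugate hne]
  exact ⟨isFlush_reflectCompl hflush hh1.1, hflush.sSet_reflectCompl hn hh1⟩
end
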